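/- arXiv:0707.2929 — 3 statements merged into one kernel-verified Lean document; each statement's English description precedes it below -/
import Mathlib

section
/- For the group G = GL_n(ℂ) acting on V = Hom(ℂ^n, ℂ^p) ⊕ Hom(ℂ^p, ℂ^n) by g.(L ⊕ L̃) = (L g⁻¹) ⊕ (g L̃), the space of G-invariant quadratic forms S²(V*)^G is isomorphic as a complex vector space to End(ℂ^p)*, i.e. it has dimension p². -/
/-
The scalar matrices `t • 1` act by `(L, M) ↦ (t⁻¹ • L, t • M)`, so an invariant quadratic form `q`
vanishes on both factors and is the bilinear form `B L M = polar q (L, 0) (0, M)`. Since invertible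
matrices span all matrices, `GL n`-invariance of `B` upgrades to `B (L * X) M = B L (X * M)` for
every `X`. Factoring `single i b 1 = single i a 1 * single a b 1` through a fixed index `a` then
shows `B L M = φ (L * M)` for a linear form `φ` on `p × p` matrices, unique because the products
`single i a 1 * single a j 1` exhaust the matrix units.
-/

open Matrix

/-- The space of `GL n ℂ`-invariant quadratic forms on
`V = Hom(ℂⁿ, ℂᵖ) ⊕ Hom(ℂᵖ, ℂⁿ)`, where the two `Hom` spaces are realized as
rectangular matrices and `g ∈ GL n ℂ` acts by `(L, M) ↦ (L g⁻¹, g M)`. -/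
def invariantQuadraticFormsGL (n p : ℕ) :
    Submodule ℂ (QuadraticForm ℂ
      (Matrix (Fin p) (Fin n) ℂ × Matrix (Fin n) (Fin p) ℂ)) where
  carrier := {q | ∀ g : GL (Fin n) ℂ,
    ∀ L : Matrix (Fin p) (Fin n) ℂ, ∀ M : Matrix (Fin n) (Fin p) ℂ,
      q (L * (↑g⁻¹ : Matrix (Fin n) (Fin n) ℂ), (↑g : Matrix (Fin n) (Fin n) ℂ) * M) = q (L, M)}
  add_mem' := by
    intro a b ha hb g L M
    simp only [QuadraticMap.add_apply, ha g L M, hb g L M]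
  zero_mem' := by
    intro g L M
    simp
  smul_mem' := by
    intro c q hq g L M
    simp only [QuadraticMap.smul_apply, hq g L M]

theorem QuadraticMap.apply_prod_eq_polar {R M₁ M₂ N : Type*} [CommRing R] [AddCommGroup M₁]
    [AddCommGroup M₂] [AddCommGroup N] [Module R M₁] [Module R M₂] [Module R N]
    (q : QuadraticMap R (M₁ × M₂) N) (h₁ : ∀ x, q (x, 0) = 0) (h₂ : ∀ y, q (0, y) = 0)
    (x : M₁) (y : M₂) : q (x, y) = polar q (x, 0) (0, y) := by
  simp [QuadraticMap.polar, h₁, h₂]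

namespace Matrix

variable {K : Type*} [Field K] {l m n : Type*} [Fintype n]

noncomputable def mulQuadraticForm :
    Module.Dual K (Matrix l m K) →ₗ[K] QuadraticForm K (Matrix l n K × Matrix n m K) where
  toFun φ := LinearMap.BilinMap.toQuadraticMap <| ((mulLinearMap K).compr₂ φ).compl₁₂
    (LinearMap.fst K (Matrix l n K) (Matrix n m K)) (LinearMap.snd K (Matrix l n K) (Matrix n m K))
  map_add' _ _ := QuadraticMap.ext fun _ => rfl
  map_smul' _ _ := QuadraticMap.ext fun _ => rfl

@[simp]
theorem mulQuadraticForm_apply (φ : Module.Dual K (Matrix l m K))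
    (x : Matrix l n K × Matrix n m K) : mulQuadraticForm φ x = φ (x.1 * x.2) := rfl

variable [DecidableEq n]

theorem span_units_eq_top [Infinite K] :
    Submodule.span K (Set.range ((↑) : (Matrix n n K)ˣ → Matrix n n K)) = ⊤ := by
  refine Submodule.eq_top_iff'.2 fun X => ?_
  obtain ⟨t, ht⟩ := X.finite_spectrum.exists_notMem
  obtain ⟨u, hu⟩ := spectrum.notMem_iff.1 ht
  have hX : X = t • ((1 : (Matrix n n K)ˣ) : Matrix n n K) - u := by
    rw [hu, Algebra.algebraMap_eq_smul_one, Units.val_one, sub_sub_cancel]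
  rw [hX]
  exact Submodule.sub_mem _ (Submodule.smul_mem _ _ (Submodule.subset_span ⟨1, rfl⟩))
    (Submodule.subset_span ⟨u, rfl⟩)

def IsBalanced {V : Type*} [AddCommGroup V] [Module K V]
    (B : Matrix l n K →ₗ[K] Matrix n m K →ₗ[K] V) : Prop :=
  ∀ (X : Matrix n n K) L M, B (L * X) M = B L (X * M)

theorem IsBalanced.of_units {V : Type*} [AddCommGroup V] [Module K V] [Infinite K]
    {B : Matrix l n K →ₗ[K] Matrix n m K →ₗ[K] V}
    (hB : ∀ (g : GL n K) L M, B (L * (↑g⁻¹ : Matrix n n K)) ((g : Matrix n n K) * M) = B L M) :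
    IsBalanced B := fun X L M => by
  have hunits : (B.flip M).comp (mulLeftLinearMap n K L) =
      (B L).comp (mulRightLinearMap n K M) :=
    LinearMap.ext_on_range span_units_eq_top fun g => by
      simpa [Matrix.mul_assoc] using (hB g (L * (g : Matrix n n K)) M).symm
  exact LinearMap.congr_fun hunits X

theorem IsBalanced.exists_eq_comp_mul {V : Type*} [AddCommGroup V] [Module K V]
    [Fintype l] [Fintype m] [DecidableEq l] [DecidableEq m] [Nonempty n]
    {B : Matrix l n K →ₗ[K] Matrix n m K →ₗ[K] V} (hB : IsBalanced B) :
    ∃ φ : Matrix l m K →ₗ[K] V, ∀ L M, B L M = φ (L * M) := by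
  let a : n := Classical.arbitrary n
  let φ := (stdBasis K l m).constr K fun ij => B (single ij.1 a 1) (single a ij.2 1)
  suffices B = (mulLinearMap K).compr₂ φ from ⟨φ, fun L M => LinearMap.congr_fun₂ this L M⟩
  refine LinearMap.ext_basis (stdBasis K l n) (stdBasis K n m) fun ⟨i, b⟩ ⟨c, j⟩ => ?_
  have hfactor : B (single i b 1) (single c j 1) =
      B (single i a 1) (single a b (1 : K) * single c j (1 : K)) := by
    rw [← hB, single_mul_single_same, mul_one]
  simp only [stdBasis_eq_single, LinearMap.compr₂_apply, mulLinearMap_apply_apply, hfactor]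
  by_cases hbc : b = c
  · subst hbc
    rw [single_mul_single_same, single_mul_single_same, mul_one, ← stdBasis_eq_single (R := K) i j,
      Module.Basis.constr_basis]
  · rw [single_mul_single_of_ne (h := hbc), single_mul_single_of_ne (h := hbc), map_zero, map_zero]

def IsGLInvariant (q : QuadraticForm K (Matrix l n K × Matrix n m K)) : Prop :=
  ∀ g : GL n K, ∀ L M, q (L * (↑g⁻¹ : Matrix n n K), (g : Matrix n n K) * M) = q (L, M)

theorem isGLInvariant_mulQuadraticForm (φ : Module.Dual K (Matrix l m K)) :
    IsGLInvariant (mulQuadraticForm (n := n) φ) := fun g L M => by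
  simp [Matrix.mul_assoc]

theorem mulQuadraticForm_injective [Fintype l] [Fintype m] [DecidableEq l] [DecidableEq m]
    [Nonempty n] : Function.Injective (mulQuadraticForm (K := K) (l := l) (m := m) (n := n)) := by
  intro φ ψ h
  let a : n := Classical.arbitrary n
  refine (stdBasis K l m).ext fun ⟨i, j⟩ => ?_
  simpa [stdBasis_eq_single, single_mul_single_same] using
    congr($h (single i a (1 : K), single a j (1 : K)))

theorem IsGLInvariant.apply_zero_eq_zero [Infinite K]
    {q : QuadraticForm K (Matrix l n K × Matrix n m K)} (hq : IsGLInvariant q) :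
    (∀ L, q (L, 0) = 0) ∧ ∀ M, q (0, M) = 0 := by
  obtain ⟨t, ht⟩ := (Set.toFinite ({0, 1, -1} : Set K)).exists_notMem
  simp only [Set.mem_insert_iff, Set.mem_singleton_iff, not_or] at ht
  obtain ⟨ht0, ht1, ht1'⟩ := ht
  have hsq : t * t ≠ 1 := fun h => (mul_self_eq_one_iff.1 h).elim ht1 ht1'
  have hsq' : t⁻¹ * t⁻¹ ≠ 1 := by rwa [← mul_inv, Ne, inv_eq_one]
  have hscalar : ∀ L M, q (t⁻¹ • (L, 0) + t • (0, M)) = q (L, M) := fun L M => by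
    simpa [Units.smul_def] using hq (Units.mk0 t ht0 • 1) L M
  have hfixed : ∀ (c : K) v, c * c ≠ 1 → q (c • v) = q v → q v = 0 := fun c v hc h => by
    rw [QuadraticMap.map_smul, smul_eq_mul, ← sub_eq_zero, ← sub_one_mul, mul_eq_zero] at h
    exact h.resolve_left (sub_ne_zero.2 hc)
  exact ⟨fun L => hfixed _ _ hsq' (by simpa using hscalar L 0),
    fun M => hfixed _ _ hsq (by simpa using hscalar 0 M)⟩

theorem IsGLInvariant.exists_mulQuadraticForm_eq [Infinite K] [Fintype l] [Fintype m]
    [DecidableEq l] [DecidableEq m] [Nonempty n]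
    {q : QuadraticForm K (Matrix l n K × Matrix n m K)} (hq : IsGLInvariant q) :
    ∃ φ, mulQuadraticForm φ = q := by
  obtain ⟨hL, hM⟩ := hq.apply_zero_eq_zero
  let B := (QuadraticMap.polarBilin q).compl₁₂ (LinearMap.inl K _ _) (LinearMap.inr K _ _)
  have hqB : ∀ L M, q (L, M) = B L M := q.apply_prod_eq_polar hL hM
  have hB : IsBalanced B := IsBalanced.of_units fun g L M => by simp only [← hqB, hq g L M]
  obtain ⟨φ, hφ⟩ := hB.exists_eq_comp_mul
  exact ⟨φ, QuadraticMap.ext fun ⟨L, M⟩ => by rw [mulQuadraticForm_apply, hqB, hφ]⟩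

end Matrix

/-- For `G = GL_n(ℂ)` acting on
`V = Hom(ℂⁿ, ℂᵖ) ⊕ Hom(ℂᵖ, ℂⁿ)` by `g.(L ⊕ L̃) = (L g⁻¹) ⊕ (g L̃)`,
the space `S²(V*)^G` of `G`-invariant quadratic forms is isomorphic, as a complex
vector space, to `End(ℂᵖ)* = (Matrix p p ℂ)*`; in particular it has dimension `p²`. -/
theorem invariant_quadratic_forms_GL_iso_dual_End (n p : ℕ) (hn : 0 < n) :
    Nonempty ((invariantQuadraticFormsGL n p) ≃ₗ[ℂ]
        Module.Dual ℂ (Matrix (Fin p) (Fin p) ℂ)) ∧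
      Module.finrank ℂ (invariantQuadraticFormsGL n p) = p ^ 2 := by
  have : Nonempty (Fin n) := ⟨⟨0, hn⟩⟩
  let e : Module.Dual ℂ (Matrix (Fin p) (Fin p) ℂ) ≃ₗ[ℂ] invariantQuadraticFormsGL n p :=
    .ofBijective (mulQuadraticForm.codRestrict _ isGLInvariant_mulQuadraticForm)
      ⟨fun _ _ h => mulQuadraticForm_injective (congrArg Subtype.val h),
        fun ⟨_, hq⟩ => (IsGLInvariant.exists_mulQuadraticForm_eq hq).imp fun _ => Subtype.ext⟩
  refine ⟨⟨e.symm⟩, ?_⟩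
  rw [← e.finrank_eq, Subspace.dual_finrank_eq, Module.finrank_matrix, Module.finrank_self, sq,
    Fintype.card_fin, mul_one]
end

section
/- Define the quadratic map Q : Hom(ℂ^n, ℂ^p) ⊕ Hom(ℂ^p, ℂ^n) → End(ℂ^p ⊕ (ℂ^p)*) by Q(L ⊕ L̃) = [[L L̃, L β⁻¹ Lᵗ],[L̃ᵗ β L̃, L̃ᵗ Lᵗ]], where β : ℂ^n → (ℂ^n)* is a nondegenerate symmetric (resp. alternating) bilinear form. Then the image of Q lies in Sym_s(U) (resp. Sym_a(U)), i.e. Q(v) commutes with the canonical bilinear form: b(Q(v)x, y) = b(x, Q(v)y) for all x, y ∈ U = ℂ^p ⊕ (ℂ^p)*. -/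
/-!
Write `Q = [[A, B], [C, D]]`. For the split Gram matrix `[[0, 1], [±1, 0]]` of `b`, the identity
`Qᵀ T = T Q` amounts blockwise to `D = Aᵀ` together with `Bᵀ = ±B` and `Cᵀ = ±C`. For the quadratic
map `D = Mᵀ Lᵀ = (L M)ᵀ` holds outright, while `B = L β⁻¹ Lᵀ` and `C = Mᵀ β M` are congruent to
`β⁻¹` and `β`, hence inherit the symmetry (resp. skew-symmetry) of `β`.
-/

open Matrix

namespace Matrix

variable {m n R : Type*}

theorem transpose_mul_mul_transpose [Fintype n] [CommSemiring R] (A : Matrix m n R)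
    (X : Matrix n n R) :
    (A * X * Aᵀ)ᵀ = A * Xᵀ * Aᵀ := by
  simp only [transpose_mul, transpose_transpose, Matrix.mul_assoc]

theorem transpose_transpose_mul_mul [Fintype n] [CommSemiring R] (A : Matrix n m R)
    (X : Matrix n n R) :
    (Aᵀ * X * A)ᵀ = Aᵀ * Xᵀ * A := by
  simpa using transpose_mul_mul_transpose Aᵀ X

theorem inv_neg_of_isUnit [Fintype n] [DecidableEq n] [CommRing R] {A : Matrix n n R}
    (hA : IsUnit A) : (-A)⁻¹ = -A⁻¹ :=
  inv_eq_right_inv <| by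
    rw [neg_mul_neg, mul_nonsing_inv A ((isUnit_iff_isUnit_det A).mp hA)]

theorem fromBlocks_transpose_mul_symmForm_comm [Fintype m] [DecidableEq m] [Semiring R]
    {A B C D : Matrix m m R} (hB : Bᵀ = B) (hC : Cᵀ = C) (hD : D = Aᵀ) :
    (fromBlocks A B C D)ᵀ * fromBlocks 0 1 1 0 = fromBlocks 0 1 1 0 * fromBlocks A B C D := by
  simp [fromBlocks_transpose, fromBlocks_multiply, hB, hC, hD]

theorem fromBlocks_transpose_mul_altForm_comm [Fintype m] [DecidableEq m] [Ring R]
    {A B C D : Matrix m m R} (hB : Bᵀ = -B) (hC : Cᵀ = -C) (hD : D = Aᵀ) :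
    (fromBlocks A B C D)ᵀ * fromBlocks 0 1 (-1) 0 = fromBlocks 0 1 (-1) 0 * fromBlocks A B C D := by
  simp [fromBlocks_transpose, fromBlocks_multiply, hB, hC, hD]

end Matrix

/-- The quadratic map
`Q(L ⊕ L̃) = [[L L̃, L β⁻¹ Lᵗ], [L̃ᵗ β L̃, L̃ᵗ Lᵗ]]` on
`Hom(ℂⁿ, ℂᵖ) ⊕ Hom(ℂᵖ, ℂⁿ)` takes values in `Sym_b(U)`, `U = ℂᵖ ⊕ (ℂᵖ)*`:
its value is self-adjoint for the canonical symmetric form `s` (with Gram matrix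
`T_s = [[0,1],[1,0]]`) when `β` is symmetric, and for the canonical alternating
form `a` (with Gram matrix `T_a = [[0,1],[-1,0]]`) when `β` is alternating.
Self-adjointness `b(Q v x, y) = b(x, Q v y)` is expressed as `(Q v)ᵀ * T = T * Q v`. -/
theorem quadratic_map_into_Sym (n p : ℕ) (β : Matrix (Fin n) (Fin n) ℂ)
    (hβ : IsUnit β) (L : Matrix (Fin p) (Fin n) ℂ) (M : Matrix (Fin n) (Fin p) ℂ) :
    (βᵀ = β →
      (Matrix.fromBlocks (L * M) (L * β⁻¹ * Lᵀ) (Mᵀ * β * M) (Mᵀ * Lᵀ))ᵀ *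
          Matrix.fromBlocks (0 : Matrix (Fin p) (Fin p) ℂ) 1 1 0 =
        Matrix.fromBlocks (0 : Matrix (Fin p) (Fin p) ℂ) 1 1 0 *
          Matrix.fromBlocks (L * M) (L * β⁻¹ * Lᵀ) (Mᵀ * β * M) (Mᵀ * Lᵀ)) ∧
    (βᵀ = -β →
      (Matrix.fromBlocks (L * M) (L * β⁻¹ * Lᵀ) (Mᵀ * β * M) (Mᵀ * Lᵀ))ᵀ *
          Matrix.fromBlocks (0 : Matrix (Fin p) (Fin p) ℂ) 1 (-1) 0 =
        Matrix.fromBlocks (0 : Matrix (Fin p) (Fin p) ℂ) 1 (-1) 0 *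
          Matrix.fromBlocks (L * M) (L * β⁻¹ * Lᵀ) (Mᵀ * β * M) (Mᵀ * Lᵀ)) := by
  refine ⟨fun hsymm => ?_, fun hskew => ?_⟩
  · refine fromBlocks_transpose_mul_symmForm_comm ?_ ?_ (transpose_mul L M).symm
    · rw [transpose_mul_mul_transpose, transpose_nonsing_inv, hsymm]
    · rw [transpose_transpose_mul_mul, hsymm]
  · refine fromBlocks_transpose_mul_altForm_comm ?_ ?_ (transpose_mul L M).symm
    · rw [transpose_mul_mul_transpose, transpose_nonsing_inv, hskew, inv_neg_of_isUnit hβ,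
        Matrix.mul_neg, Matrix.neg_mul]
    · rw [transpose_transpose_mul_mul, hskew, Matrix.mul_neg, Matrix.neg_mul]
end

section
/- Let δ : ℂ^n → (ℂ^n)* be a nondegenerate symmetric bilinear form with associated anti-unitary involution T = c_n⁻¹ δ satisfying T² = 1. Then the map ψ : L ↦ L ⊕ (c_p L T) determines an O_n(ℝ)-equivariant isomorphism of real vector spaces with complex structure from Hom(ℂ^n, ℂ^p) onto Hom(ℝ^n, ℝ^{2p}), where ℝ^n ≅ Fix(T) ⊂ ℂ^n and ℝ^{2p} ≅ Fix(C) ⊂ ℂ^p ⊕ (ℂ^p)* with C(u ⊕ φ) = (c_p⁻¹ φ) ⊕ (c_p u). -/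
open Matrix

/-- The real subspace `Fix(T) ⊂ ℂⁿ` of fixed points of the anti-unitary
involution `T = c_n⁻¹ δ`, i.e. `T v = star (δ *ᵥ v)`. -/
noncomputable def fixT (n : ℕ) (δ : Matrix (Fin n) (Fin n) ℂ) : Submodule ℝ (Fin n → ℂ) where
  carrier := {v | star (δ *ᵥ v) = v}
  add_mem' := by
    intro a b ha hb
    simp only [Set.mem_setOf_eq] at *
    simp [Matrix.mulVec_add, star_add, ha, hb]
  zero_mem' := by simp [Set.mem_setOf_eq, Matrix.mulVec_zero]
  smul_mem' := by
    intro r v hv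
    simp only [Set.mem_setOf_eq] at *
    simp [Matrix.mulVec_smul, star_smul, hv]

/-- The real subspace `Fix(C) ⊂ ℂᵖ ⊕ (ℂᵖ)*` of fixed points of the anti-linear
involution `C(u ⊕ φ) = (c_p⁻¹ φ) ⊕ (c_p u)`, i.e. pairs `(u, star u)`. -/
noncomputable def fixC (p : ℕ) : Submodule ℝ ((Fin p → ℂ) × (Fin p → ℂ)) where
  carrier := {w | w.2 = star w.1}
  add_mem' := by
    intro a b ha hb
    simp only [Set.mem_setOf_eq] at *
    simp [Prod.fst_add, Prod.snd_add, star_add, ha, hb]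
  zero_mem' := by simp [Set.mem_setOf_eq]
  smul_mem' := by
    intro r v hv
    simp only [Set.mem_setOf_eq] at *
    simp [star_smul, hv]

namespace PsiAux

lemma conj_mulVec {n p : ℕ} (L : Matrix (Fin p) (Fin n) ℂ) (v : Fin n → ℂ) :
    L.map (starRingEnd ℂ) *ᵥ star v = star (L *ᵥ v) := by
  funext i
  simp [Matrix.mulVec, dotProduct, map_sum]

variable {n p : ℕ}

lemma mem_fixT (δ : Matrix (Fin n) (Fin n) ℂ) (v : Fin n → ℂ) :
    v ∈ fixT n δ ↔ star (δ *ᵥ v) = v := Iff.rfl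

lemma map_conj_eq (δ : Matrix (Fin n) (Fin n) ℂ) (hδsym : δᵀ = δ) :
    δ.map (starRingEnd ℂ) = δᴴ := by
  ext i j
  simp only [Matrix.map_apply, Matrix.conjTranspose_apply, starRingEnd_apply]
  congr 1
  conv_lhs => rw [← hδsym]
  rw [Matrix.transpose_apply]

lemma T_T (δ : Matrix (Fin n) (Fin n) ℂ) (hδsym : δᵀ = δ) (hδu : δᴴ * δ = 1)
    (v : Fin n → ℂ) : star (δ *ᵥ star (δ *ᵥ v)) = v := by
  have h := conj_mulVec δ (star (δ *ᵥ v))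
  rw [star_star] at h
  rw [← h, map_conj_eq δ hδsym, Matrix.mulVec_mulVec, hδu, Matrix.one_mulVec]

noncomputable def Amap (δ : Matrix (Fin n) (Fin n) ℂ) (v : Fin n → ℂ) : Fin n → ℂ :=
  (2⁻¹ : ℝ) • (v + star (δ *ᵥ v))

noncomputable def Bmap (δ : Matrix (Fin n) (Fin n) ℂ) (v : Fin n → ℂ) : Fin n → ℂ :=
  (2⁻¹ : ℝ) • (Complex.I • (star (δ *ᵥ v) - v))

variable (δ : Matrix (Fin n) (Fin n) ℂ)

lemma memA (hδsym : δᵀ = δ) (hδu : δᴴ * δ = 1) (v : Fin n → ℂ) :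
    Amap δ v ∈ fixT n δ := by
  rw [mem_fixT]
  unfold Amap
  rw [Matrix.mulVec_smul, star_smul, star_trivial, Matrix.mulVec_add, star_add,
    T_T δ hδsym hδu, add_comm]

lemma memB (hδsym : δᵀ = δ) (hδu : δᴴ * δ = 1) (v : Fin n → ℂ) :
    Bmap δ v ∈ fixT n δ := by
  rw [mem_fixT]
  unfold Bmap
  rw [Matrix.mulVec_smul, star_smul, star_trivial, Matrix.mulVec_smul, star_smul,
    Matrix.mulVec_sub, star_sub, T_T δ hδsym hδu]
  rw [show star Complex.I = -Complex.I by simp]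
  module

lemma A_add_I_B (v : Fin n → ℂ) : Amap δ v + Complex.I • Bmap δ v = v := by
  funext j
  simp only [Amap, Bmap, Pi.add_apply, Pi.smul_apply, Pi.sub_apply,
    Complex.real_smul, smul_eq_mul]
  push_cast
  linear_combination ((2⁻¹ : ℂ) * ((star (δ *ᵥ v)) j - v j)) * Complex.I_sq

lemma A_smul_I (v : Fin n → ℂ) : Amap δ (Complex.I • v) = -(Bmap δ v) := by
  unfold Amap Bmap
  rw [Matrix.mulVec_smul, star_smul]
  rw [show star Complex.I = -Complex.I by simp]
  module

lemma B_smul_I (v : Fin n → ℂ) : Bmap δ (Complex.I • v) = Amap δ v := by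
  unfold Amap Bmap
  rw [Matrix.mulVec_smul, star_smul]
  rw [show star Complex.I = -Complex.I by simp]
  funext j
  simp only [Pi.add_apply, Pi.smul_apply, Pi.sub_apply, Pi.neg_apply,
    Complex.real_smul, smul_eq_mul]
  push_cast
  linear_combination (-(2⁻¹ : ℂ) * ((star (δ *ᵥ v)) j + v j)) * Complex.I_sq

lemma A_add (a b : Fin n → ℂ) : Amap δ (a + b) = Amap δ a + Amap δ b := by
  unfold Amap
  rw [Matrix.mulVec_add, star_add]
  module

lemma B_add (a b : Fin n → ℂ) : Bmap δ (a + b) = Bmap δ a + Bmap δ b := by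
  unfold Bmap
  rw [Matrix.mulVec_add, star_add]
  module

lemma A_rsmul (r : ℝ) (v : Fin n → ℂ) : Amap δ (r • v) = r • Amap δ v := by
  unfold Amap
  rw [Matrix.mulVec_smul, star_smul, star_trivial]
  module

lemma B_rsmul (r : ℝ) (v : Fin n → ℂ) : Bmap δ (r • v) = r • Bmap δ v := by
  unfold Bmap
  rw [Matrix.mulVec_smul, star_smul, star_trivial]
  module

lemma A_fix {v : Fin n → ℂ} (hv : v ∈ fixT n δ) : Amap δ v = v := by
  unfold Amap
  rw [(mem_fixT δ v).mp hv]
  funext j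
  simp only [Pi.smul_apply, Pi.add_apply, Complex.real_smul]
  push_cast
  ring

lemma B_fix {v : Fin n → ℂ} (hv : v ∈ fixT n δ) : Bmap δ v = 0 := by
  unfold Bmap
  rw [(mem_fixT δ v).mp hv]
  simp

noncomputable def gmap (hδsym : δᵀ = δ) (hδu : δᴴ * δ = 1)
    (f : ↥(fixT n δ) →ₗ[ℝ] ((Fin p → ℂ) × (Fin p → ℂ))) (v : Fin n → ℂ) : Fin p → ℂ :=
  (f ⟨Amap δ v, memA δ hδsym hδu v⟩).1 +
    Complex.I • (f ⟨Bmap δ v, memB δ hδsym hδu v⟩).1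

lemma g_add (hδsym : δᵀ = δ) (hδu : δᴴ * δ = 1)
    (f : ↥(fixT n δ) →ₗ[ℝ] ((Fin p → ℂ) × (Fin p → ℂ))) (a b : Fin n → ℂ) :
    gmap δ hδsym hδu f (a + b) = gmap δ hδsym hδu f a + gmap δ hδsym hδu f b := by
  unfold gmap
  have hA : (⟨Amap δ (a + b), memA δ hδsym hδu _⟩ : fixT n δ)
      = ⟨Amap δ a, memA δ hδsym hδu a⟩ + ⟨Amap δ b, memA δ hδsym hδu b⟩ :=
    Subtype.ext (A_add δ a b)
  have hB : (⟨Bmap δ (a + b), memB δ hδsym hδu _⟩ : fixT n δ)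
      = ⟨Bmap δ a, memB δ hδsym hδu a⟩ + ⟨Bmap δ b, memB δ hδsym hδu b⟩ :=
    Subtype.ext (B_add δ a b)
  rw [hA, hB, map_add, map_add, Prod.fst_add, Prod.fst_add, smul_add]
  abel

lemma g_rsmul (hδsym : δᵀ = δ) (hδu : δᴴ * δ = 1)
    (f : ↥(fixT n δ) →ₗ[ℝ] ((Fin p → ℂ) × (Fin p → ℂ))) (r : ℝ) (v : Fin n → ℂ) :
    gmap δ hδsym hδu f (r • v) = r • gmap δ hδsym hδu f v := by
  unfold gmap
  have hA : (⟨Amap δ (r • v), memA δ hδsym hδu _⟩ : fixT n δ)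
      = r • ⟨Amap δ v, memA δ hδsym hδu v⟩ := Subtype.ext (A_rsmul δ r v)
  have hB : (⟨Bmap δ (r • v), memB δ hδsym hδu _⟩ : fixT n δ)
      = r • ⟨Bmap δ v, memB δ hδsym hδu v⟩ := Subtype.ext (B_rsmul δ r v)
  rw [hA, hB, LinearMap.map_smul, LinearMap.map_smul, Prod.smul_fst, Prod.smul_fst,
    smul_add, smul_comm]

lemma g_I (hδsym : δᵀ = δ) (hδu : δᴴ * δ = 1)
    (f : ↥(fixT n δ) →ₗ[ℝ] ((Fin p → ℂ) × (Fin p → ℂ))) (v : Fin n → ℂ) :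
    gmap δ hδsym hδu f (Complex.I • v) = Complex.I • gmap δ hδsym hδu f v := by
  unfold gmap
  have hA : (⟨Amap δ (Complex.I • v), memA δ hδsym hδu _⟩ : fixT n δ)
      = -⟨Bmap δ v, memB δ hδsym hδu v⟩ := Subtype.ext (A_smul_I δ v)
  have hB : (⟨Bmap δ (Complex.I • v), memB δ hδsym hδu _⟩ : fixT n δ)
      = ⟨Amap δ v, memA δ hδsym hδu v⟩ := Subtype.ext (B_smul_I δ v)
  rw [hA, hB, map_neg]
  rw [smul_add, smul_smul, Complex.I_mul_I, neg_one_smul]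
  simp [add_comm]

lemma g_csmul (hδsym : δᵀ = δ) (hδu : δᴴ * δ = 1)
    (f : ↥(fixT n δ) →ₗ[ℝ] ((Fin p → ℂ) × (Fin p → ℂ))) (c : ℂ) (v : Fin n → ℂ) :
    gmap δ hδsym hδu f (c • v) = c • gmap δ hδsym hδu f v := by
  have hv : c • v = (c.re : ℝ) • v + (c.im : ℝ) • (Complex.I • v) := by
    funext j
    simp only [Pi.add_apply, Pi.smul_apply, Complex.real_smul, smul_eq_mul]
    linear_combination (-(v j)) * (Complex.re_add_im c)
  rw [hv, g_add, g_rsmul, g_rsmul, g_I]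
  funext j
  simp only [Pi.add_apply, Pi.smul_apply, Complex.real_smul, smul_eq_mul]
  linear_combination (gmap δ hδsym hδu f v j) * (Complex.re_add_im c)

noncomputable def gLin (hδsym : δᵀ = δ) (hδu : δᴴ * δ = 1)
    (f : ↥(fixT n δ) →ₗ[ℝ] ((Fin p → ℂ) × (Fin p → ℂ))) :
    (Fin n → ℂ) →ₗ[ℂ] (Fin p → ℂ) where
  toFun := gmap δ hδsym hδu f
  map_add' := g_add δ hδsym hδu f
  map_smul' := g_csmul δ hδsym hδu f

noncomputable def Lmat (hδsym : δᵀ = δ) (hδu : δᴴ * δ = 1)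
    (f : ↥(fixT n δ) →ₗ[ℝ] ((Fin p → ℂ) × (Fin p → ℂ))) : Matrix (Fin p) (Fin n) ℂ :=
  LinearMap.toMatrix' (gLin δ hδsym hδu f)

lemma Lmat_mulVec (hδsym : δᵀ = δ) (hδu : δᴴ * δ = 1)
    (f : ↥(fixT n δ) →ₗ[ℝ] ((Fin p → ℂ) × (Fin p → ℂ))) (v : Fin n → ℂ) :
    Lmat δ hδsym hδu f *ᵥ v = gmap δ hδsym hδu f v := by
  have h := Matrix.toLin'_toMatrix' (gLin δ hδsym hδu f)
  calc Lmat δ hδsym hδu f *ᵥ v = Matrix.toLin' (Lmat δ hδsym hδu f) v := by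
        rw [Matrix.toLin'_apply]
    _ = gLin δ hδsym hδu f v := by rw [Lmat, h]
    _ = gmap δ hδsym hδu f v := rfl

lemma g_fix (hδsym : δᵀ = δ) (hδu : δᴴ * δ = 1)
    (f : ↥(fixT n δ) →ₗ[ℝ] ((Fin p → ℂ) × (Fin p → ℂ))) {v : Fin n → ℂ}
    (hv : v ∈ fixT n δ) : gmap δ hδsym hδu f v = (f ⟨v, hv⟩).1 := by
  unfold gmap
  have hA : (⟨Amap δ v, memA δ hδsym hδu v⟩ : fixT n δ) = ⟨v, hv⟩ :=
    Subtype.ext (A_fix δ hv)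
  have hB : (⟨Bmap δ v, memB δ hδsym hδu v⟩ : fixT n δ) = 0 :=
    Subtype.ext (B_fix δ hv)
  rw [hA, hB, map_zero]
  simp

end PsiAux

open PsiAux

/-- Let `δ` be a nondegenerate symmetric bilinear form on `ℂⁿ`
whose associated anti-unitary map `T v = star (δ *ᵥ v)` is an involution.  The map
`ψ : L ↦ (v ↦ (L v, (L̄ δ) v))` determines an `O_n(ℝ)`-equivariant isomorphism of
real vector spaces with complex structure from `Hom(ℂⁿ, ℂᵖ)` onto
`Hom(ℝⁿ, ℝ²ᵖ) = Hom_ℝ(Fix T, Fix C)`: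
(1) `ψ(L)` maps `Fix T` into `Fix C`;
(2) `ψ` is `O_n(ℝ)`-equivariant, `O_n(ℝ)` being the unitary matrices commuting with `T`;
(3) `ψ` intertwines multiplication by `i` with the complex structure
    `J(u, star u) = (i u, star (i u))` of `Fix C`;
(4) `L ↦ ψ(L)|_{Fix T}` is a bijection onto `Hom_ℝ(Fix T, Fix C)`. -/
theorem psi_equivariant_isomorphism (n p : ℕ) (δ : Matrix (Fin n) (Fin n) ℂ)
    (hδsym : δᵀ = δ) (hδu : δᴴ * δ = 1) :
    (∀ (L : Matrix (Fin p) (Fin n) ℂ) (v : Fin n → ℂ), star (δ *ᵥ v) = v →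
        (L.map (starRingEnd ℂ) * δ) *ᵥ v = star (L *ᵥ v)) ∧
    (∀ (L : Matrix (Fin p) (Fin n) ℂ) (k : Matrix (Fin n) (Fin n) ℂ),
        k ∈ Matrix.unitaryGroup (Fin n) ℂ → k.map (starRingEnd ℂ) * δ = δ * k →
        (L * k).map (starRingEnd ℂ) * δ = L.map (starRingEnd ℂ) * δ * k) ∧
    (∀ (L : Matrix (Fin p) (Fin n) ℂ) (v : Fin n → ℂ),
        ((Complex.I • L) *ᵥ v, ((Complex.I • L).map (starRingEnd ℂ) * δ) *ᵥ v) =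
          (Complex.I • (L *ᵥ v),
            star (Complex.I) • ((L.map (starRingEnd ℂ) * δ) *ᵥ v))) ∧
    (∀ f : ↥(fixT n δ) →ₗ[ℝ] ((Fin p → ℂ) × (Fin p → ℂ)),
        (∀ x, f x ∈ fixC p) →
        ∃! L : Matrix (Fin p) (Fin n) ℂ,
          ∀ (v : Fin n → ℂ) (hv : v ∈ fixT n δ),
            f ⟨v, hv⟩ = (L *ᵥ v, (L.map (starRingEnd ℂ) * δ) *ᵥ v)) := by
  have part1 : ∀ (L : Matrix (Fin p) (Fin n) ℂ) (v : Fin n → ℂ), star (δ *ᵥ v) = v →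
      (L.map (starRingEnd ℂ) * δ) *ᵥ v = star (L *ᵥ v) := by
    intro L v hv
    have hδv : δ *ᵥ v = star v := by
      conv_rhs => rw [← hv, star_star]
    rw [← Matrix.mulVec_mulVec, hδv, conj_mulVec]
  refine ⟨part1, ?_, ?_, ?_⟩
  · intro L k hk hkδ
    rw [Matrix.map_mul, Matrix.mul_assoc, hkδ, ← Matrix.mul_assoc]
  · intro L v
    have h1 : (Complex.I • L) *ᵥ v = Complex.I • (L *ᵥ v) :=
      Matrix.smul_mulVec _ _ _
    have h2 : (Complex.I • L).map (starRingEnd ℂ)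
        = (starRingEnd ℂ Complex.I) • L.map (starRingEnd ℂ) := by
      ext i j; simp [Matrix.map_apply]
    rw [Prod.mk.injEq]
    refine ⟨h1, ?_⟩
    rw [h2, Matrix.smul_mul, Matrix.smul_mulVec, starRingEnd_apply]
  · intro f hf
    refine ⟨Lmat δ hδsym hδu f, ?_, ?_⟩
    · intro v hv
      have h1 : Lmat δ hδsym hδu f *ᵥ v = (f ⟨v, hv⟩).1 := by
        rw [Lmat_mulVec, g_fix]
      have h2 := part1 (Lmat δ hδsym hδu f) v hv
      have h3 : (f ⟨v, hv⟩).2 = star (f ⟨v, hv⟩).1 := hf ⟨v, hv⟩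
      refine Prod.ext h1.symm ?_
      rw [h3, h2, h1]
    · intro L' hL'
      have hmv : ∀ v, L' *ᵥ v = Lmat δ hδsym hδu f *ᵥ v := by
        intro v
        have key : ∀ (M : Matrix (Fin p) (Fin n) ℂ),
            (∀ (w : Fin n → ℂ) (hw : w ∈ fixT n δ),
              f ⟨w, hw⟩ = (M *ᵥ w, (M.map (starRingEnd ℂ) * δ) *ᵥ w)) →
            M *ᵥ v = (f ⟨Amap δ v, memA δ hδsym hδu v⟩).1
              + Complex.I • (f ⟨Bmap δ v, memB δ hδsym hδu v⟩).1 := by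
          intro M hM
          have hAv := congrArg Prod.fst (hM (Amap δ v) (memA δ hδsym hδu v))
          have hBv := congrArg Prod.fst (hM (Bmap δ v) (memB δ hδsym hδu v))
          simp only at hAv hBv
          conv_lhs => rw [← A_add_I_B δ v]
          rw [Matrix.mulVec_add, Matrix.mulVec_smul, hAv, hBv]
        have e1 := key L' hL'
        have e2 : Lmat δ hδsym hδu f *ᵥ v = _ := key (Lmat δ hδsym hδu f) ?_
        · rw [e1, e2]
        · intro w hw
          have h1 : Lmat δ hδsym hδu f *ᵥ w = (f ⟨w, hw⟩).1 := by
            rw [Lmat_mulVec, g_fix]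
          have h2 := part1 (Lmat δ hδsym hδu f) w hw
          have h3 : (f ⟨w, hw⟩).2 = star (f ⟨w, hw⟩).1 := hf ⟨w, hw⟩
          refine Prod.ext h1.symm ?_
          rw [h3, h2, h1]
      apply Matrix.toLin'.injective
      refine LinearMap.ext fun v => ?_
      rw [Matrix.toLin'_apply, Matrix.toLin'_apply]
      exact hmv v
end
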